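/- arXiv:1608.00870 — 2 statements merged into one kernel-verified Lean document; each statement's English description precedes it below -/
import Mathlib

section
/- The map term : C*_Lb → C_Lb, sending a causal graph G to the product ∏_{(v1,v2) ∈ G} v1·v2, is an isomorphism between the algebras ⟨C*_Lb, *, ·, ∅, ⊆⟩ and ⟨C_Lb, *, ·, 1, ≤⟩; that is, term is a bijection satisfying term(∅) = 1, term(G * G') = term(G) * term(G'), term(G · G') = term(G) · term(G'), and G ⊆ G' if and only if term(G') ≤ term(G), for all causal graphs G, G'. -/
/-!  Causal values (Cabalar–Fandinno, causal stable models for disjunctive programs).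

Causal values are the equivalence classes of terms (built from labels in `Lb` by possibly
infinite products `∏`, possibly infinite sums `∑` and application `·`) under the axioms of a
completely distributive complete lattice (meet `*` = `⊓`/`sInf`, join `+` = `⊔`/`sSup`,
`1` = `⊤` the empty product, `0` = `⊥` the empty sum) together with the axioms for
application listed in the paper.  We formalize "the algebra of causal values `V_Lb`" as a
causal algebra (a completely distributive complete lattice with the extra operations
satisfying the axioms) that is free/initial, i.e. a quotient of the term algebra by exactly
the equational theory generated by the axioms. -/

open scoped Classical

namespace Causal

/-- The extra operations of a causal algebra: application `·` and label constants. -/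
class CausalOps (Lb : Type) (V : Type) where
  capp : V → V → V
  clabel : Lb → V

/-- Application `t · u`. -/
def capp (Lb : Type) {V : Type} [CausalOps Lb V] (t u : V) : V :=
  CausalOps.capp (Lb := Lb) t u

/-- The value of a label. -/
def clabel (Lb V : Type) [CausalOps Lb V] (l : Lb) : V :=
  CausalOps.clabel l

/-- The causes `C_Lb`: values with a representative term without addition, i.e. the closure
of the labels under (possibly infinite, possibly empty) products and application. -/
inductive IsCause (Lb : Type) {V : Type} [CompletelyDistribLattice V] [CausalOps Lb V] : V → Prop
  | label (l : Lb) : IsCause Lb (clabel Lb V l)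
  | inf (S : Set V) (h : ∀ v ∈ S, IsCause Lb v) : IsCause Lb (sInf S)
  | app (t u : V) (ht : IsCause Lb t) (hu : IsCause Lb u) : IsCause Lb (capp Lb t u)

/-- The axioms of a causal algebra (Figure 1 of the paper), on top of a completely
distributive complete lattice.  Here `*` is `⊓`, `+` is `⊔`, `1 = ⊤`, `0 = ⊥`. -/
class CausalAlgebra (Lb : Type) (V : Type) [CompletelyDistribLattice V] [CausalOps Lb V] :
    Prop where
  capp_assoc : ∀ t u w : V, capp Lb t (capp Lb u w) = capp Lb (capp Lb t u) w
  absorb_sup : ∀ t u w : V, t ⊔ capp Lb (capp Lb u t) w = t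
  absorb_inf : ∀ t u w : V, t ⊓ capp Lb (capp Lb u t) w = capp Lb (capp Lb u t) w
  top_capp : ∀ t : V, capp Lb ⊤ t = t
  capp_top : ∀ t : V, capp Lb t ⊤ = t
  capp_bot : ∀ t : V, capp Lb t ⊥ = ⊥
  bot_capp : ∀ t : V, capp Lb ⊥ t = ⊥
  label_idem : ∀ l : Lb, capp Lb (clabel Lb V l) (clabel Lb V l) = clabel Lb V l
  capp_sSup : ∀ (t : V) (S : Set V), capp Lb t (sSup S) = ⨆ u ∈ S, capp Lb t u
  sSup_capp : ∀ (S : Set V) (t : V), capp Lb (sSup S) t = ⨆ u ∈ S, capp Lb u t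
  cause_capp_capp : ∀ c d e : V, IsCause Lb c → IsCause Lb d → IsCause Lb e → d ≠ ⊤ →
    capp Lb (capp Lb c d) e = capp Lb c d ⊓ capp Lb d e
  cause_capp_inf : ∀ c d e : V, IsCause Lb c → IsCause Lb d → IsCause Lb e →
    capp Lb c (d ⊓ e) = capp Lb c d ⊓ capp Lb c e
  cause_inf_capp : ∀ c d e : V, IsCause Lb c → IsCause Lb d → IsCause Lb e →
    capp Lb (c ⊓ d) e = capp Lb c e ⊓ capp Lb d e
  cause_capp_sInf : ∀ (c : V) (S : Set V), IsCause Lb c → (∀ d ∈ S, IsCause Lb d) →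
    S.Nonempty → capp Lb c (sInf S) = ⨅ d ∈ S, capp Lb c d
  cause_sInf_capp : ∀ (S : Set V) (e : V), (∀ d ∈ S, IsCause Lb d) → IsCause Lb e →
    S.Nonempty → capp Lb (sInf S) e = ⨅ d ∈ S, capp Lb d e

/-- Homomorphisms of causal algebras preserve sums, products, application and labels. -/
def IsCausalHom (Lb : Type) {V W : Type} [CompletelyDistribLattice V] [CausalOps Lb V]
    [CompletelyDistribLattice W] [CausalOps Lb W] (h : V → W) : Prop :=
  (∀ S : Set V, h (sSup S) = sSup (h '' S)) ∧
  (∀ S : Set V, h (sInf S) = sInf (h '' S)) ∧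
  (∀ t u : V, h (capp Lb t u) = capp Lb (h t) (h u)) ∧
  (∀ l : Lb, h (clabel Lb V l) = clabel Lb W l)

/-- `V` is (a copy of) the algebra `V_Lb` of causal values over the labels `Lb`:
the free (initial) causal algebra over `Lb`, i.e. the quotient of the term algebra by the
equational theory generated by the axioms. -/
class IsValueAlgebra (Lb : Type) (V : Type) [CompletelyDistribLattice V] [CausalOps Lb V] :
    Prop where
  alg : CausalAlgebra Lb V
  free : ∀ (W : Type) [CompletelyDistribLattice W] [CausalOps Lb W],
    CausalAlgebra Lb W → ∃! h : V → W, IsCausalHom Lb h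

/-! ### Labelled logic programs over a signature `⟨At, Lb⟩` with `At ⊆ Lb`. -/

/-- A labelled rule
`r : A₁ ∨ … ∨ A_m ∨ not A_{m+1} ∨ … ∨ not A_n ← B₁, …, B_k, not B_{k+1}, …, not B_l`
with all head/body atoms in `At`. -/
structure LRule (Lb : Type) (At : Set Lb) where
  lbl : Lb
  hpos : Finset Lb
  hneg : Finset Lb
  bpos : Finset Lb
  bneg : Finset Lb
  hpos_sub : ∀ a ∈ hpos, a ∈ At
  hneg_sub : ∀ a ∈ hneg, a ∈ At
  bpos_sub : ∀ a ∈ bpos, a ∈ At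
  bneg_sub : ∀ a ∈ bneg, a ∈ At

variable {Lb V : Type} {At : Set Lb}

/-- The positive head, as a set of atoms. -/
def LRule.hposA (r : LRule Lb At) : Set ↥At := {a | (a : Lb) ∈ r.hpos}
/-- The negative head, as a set of atoms. -/
def LRule.hnegA (r : LRule Lb At) : Set ↥At := {a | (a : Lb) ∈ r.hneg}
/-- The positive body, as a set of atoms. -/
def LRule.bposA (r : LRule Lb At) : Set ↥At := {a | (a : Lb) ∈ r.bpos}
/-- The negative body, as a set of atoms. -/
def LRule.bnegA (r : LRule Lb At) : Set ↥At := {a | (a : Lb) ∈ r.bneg}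

/-- A rule is positive iff it contains no negative literals. -/
def LRule.isPositive (r : LRule Lb At) : Prop := r.hneg = ∅ ∧ r.bneg = ∅

/-- A program is positive iff all its rules are. -/
def PositiveProg (P : Set (LRule Lb At)) : Prop := ∀ r ∈ P, r.isPositive

section Sem

variable [CompletelyDistribLattice V] [CausalOps Lb V]

/-- The value `I(not A)` of a negative literal: `1` if `I(A) = 0` and `0` otherwise. -/
noncomputable def nval (v : V) : V := if v = ⊥ then ⊤ else ⊥

/-- The value of the body of a rule under an interpretation `I : At → V_Lb`:
`I(B₁) * … * I(B_k) * I(not B_{k+1}) * … * I(not B_l)`. -/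
noncomputable def bodyVal (I : ↥At → V) (r : LRule Lb At) : V :=
  (⨅ a ∈ r.bposA, I a) ⊓ (⨅ a ∈ r.bnegA, nval (I a))

/-- `I` satisfies a rule `r` iff `(body value) · r_lbl · A_j ≤ I(L_j)` for some head literal
`L_j` with atom `A_j`. -/
noncomputable def Satisfies (I : ↥At → V) (r : LRule Lb At) : Prop :=
  (∃ a ∈ r.hposA,
      capp Lb (capp Lb (bodyVal I r) (clabel Lb V r.lbl)) (clabel Lb V (a : Lb)) ≤ I a) ∨
  (∃ a ∈ r.hnegA,
      capp Lb (capp Lb (bodyVal I r) (clabel Lb V r.lbl)) (clabel Lb V (a : Lb)) ≤ nval (I a))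

/-- `I ⊨ P`. -/
noncomputable def Models (I : ↥At → V) (P : Set (LRule Lb At)) : Prop := ∀ r ∈ P, Satisfies I r

/-- `I` is standard (two-valued) iff it maps each atom to `{0, 1}`. -/
def IsStandard (I : ↥At → V) : Prop := ∀ a, I a = ⊥ ∨ I a = ⊤

/-- `Atoms(I) = { A ∈ At | I(A) ≠ 0 }`. -/
def AtomsOf (I : ↥At → V) : Set ↥At := {a | I a ≠ ⊥}

/-- The standard interpretation `I^st` associated to `I`. -/
noncomputable def Ist (I : ↥At → V) : ↥At → V := fun a => if I a = ⊥ then ⊥ else ⊤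

/-- `I ≤ J` iff `I(A) ≤ J(A)` for every atom `A`. -/
def ile (I J : ↥At → V) : Prop := ∀ a, I a ≤ J a

/-- `I ≼ J` iff `I ≤ J` or `Atoms(I) ⊊ Atoms(J)`. -/
def iwle (I J : ↥At → V) : Prop := ile I J ∨ AtomsOf I ⊂ AtomsOf J

/-- `I` is a causal stable model of a positive program `P` iff it is a `≼`-minimal
model of `P`. -/
noncomputable def CausalStablePos (P : Set (LRule Lb At)) (I : ↥At → V) : Prop :=
  Models I P ∧ ∀ J : ↥At → V, Models J P → iwle J I → J = I

/-- `I` is a standard stable model of a positive program `P` iff it is a `≼`-minimal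
standard model of `P`. -/
noncomputable def StdStablePos (P : Set (LRule Lb At)) (I : ↥At → V) : Prop :=
  IsStandard I ∧ Models I P ∧
    ∀ J : ↥At → V, IsStandard J → Models J P → iwle J I → J = I

end Sem

/-- `S ⊆ At` is closed under `P`. -/
def ClosedUnder (P : Set (LRule Lb At)) (S : Set ↥At) : Prop :=
  ∀ r ∈ P, r.bposA ∪ r.hnegA ⊆ S → (∀ a ∈ r.bnegA, a ∉ S) → ∃ a ∈ r.hposA, a ∈ S

/-- The result of deleting all negative literals of a rule. -/
def LRule.strip (r : LRule Lb At) : LRule Lb At :=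
  ⟨r.lbl, r.hpos, ∅, r.bpos, ∅, r.hpos_sub,
    fun a ha => absurd ha (Finset.notMem_empty a),
    r.bpos_sub, fun a ha => absurd ha (Finset.notMem_empty a)⟩

/-- The GL-reduct `P^S` of `P` w.r.t. a set of atoms `S`. -/
def glReduct (P : Set (LRule Lb At)) (S : Set ↥At) : Set (LRule Lb At) :=
  { r' | ∃ r ∈ P, (∀ a ∈ r.bnegA, a ∉ S) ∧ (∀ a ∈ r.hnegA, a ∈ S) ∧ r' = r.strip }

/-- `S` is a GL-stable model of `P` iff `S` is `⊆`-minimal among the sets closed under the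
positive program `P^S`. -/
def GLStable (P : Set (LRule Lb At)) (S : Set ↥At) : Prop :=
  ClosedUnder (glReduct P S) S ∧ ∀ S' ⊆ S, ClosedUnder (glReduct P S) S' → S' = S

section Sem2

variable [CompletelyDistribLattice V] [CausalOps Lb V]

/-- The causal reduct `P^I` of `P` w.r.t. an interpretation `I`. -/
def causalReduct (P : Set (LRule Lb At)) (I : ↥At → V) : Set (LRule Lb At) :=
  { r' | ∃ r ∈ P, (∀ a ∈ r.bnegA, I a = ⊥) ∧ (∀ a ∈ r.hnegA, I a ≠ ⊥) ∧ r' = r.strip }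

/-- `I` is a causal stable model of `P` iff `I` is a causal stable model of the positive
program `P^I`. -/
noncomputable def CausalStable (P : Set (LRule Lb At)) (I : ↥At → V) : Prop :=
  CausalStablePos (causalReduct P I) I

/-- A standard interpretation `J` is a standard stable model of `P` iff `J` is a standard
stable model of the positive program `P^J`. -/
noncomputable def StdStable (P : Set (LRule Lb At)) (I : ↥At → V) : Prop :=
  StdStablePos (causalReduct P I) I

end Sem2

end Causal

namespace Causal

/-- The transitive closure of a set of edges. -/
def transCl {Lb : Type} (E : Set (Lb × Lb)) : Set (Lb × Lb) :=
  {p | Relation.TransGen (fun a b => (a, b) ∈ E) p.1 p.2}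

/-- A causal graph: a set of edges over `Lb`, reflexively and transitively closed. -/
def IsCGraph {Lb : Type} (G : Set (Lb × Lb)) : Prop :=
  (∀ v w : Lb, (v, w) ∈ G → (v, v) ∈ G ∧ (w, w) ∈ G) ∧
  (∀ u v w : Lb, (u, v) ∈ G → (v, w) ∈ G → (u, w) ∈ G)

/-- The application `G · G'` of causal graphs: the transitive closure of
`G ∪ G' ∪ {(v,v') | (v,v) ∈ G and (v',v') ∈ G'}`. -/
def gApp {Lb : Type} (G G' : Set (Lb × Lb)) : Set (Lb × Lb) :=
  transCl (G ∪ G' ∪ {p | (p.1, p.1) ∈ G ∧ (p.2, p.2) ∈ G'})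

/-- `term(G) = ∏_{(v₁,v₂) ∈ G} v₁ · v₂`. -/
def termV (Lb V : Type) [CompletelyDistribLattice V] [CausalOps Lb V]
    (G : Set (Lb × Lb)) : V :=
  sInf ((fun p : Lb × Lb => capp Lb (clabel Lb V p.1) (clabel Lb V p.2)) '' G)

/-! Two identities between labels drive the computation of `term`: `a·b ⊓ b·c ≤ a·c`, so `term`
ignores transitive closure, and `(a·b)·(c·d) = a·b ⊓ b·d ⊓ b·c ⊓ c·d`, so `term G · term G'` is
the product over the edges of `G`, of `G'` and from the vertices of `G` to those of `G'`, that is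
`term (G · G')`. Both need the inner labels to differ from `⊤`. Every cause is some `term G`, by
induction on causes.

The axioms alone cannot separate values: injectivity, order reflection and `l ≠ ⊤` come from
the freeness of `V_Lb`. The families of causal graphs closed under supergraphs form a causal
algebra in which `term G` is the family of supergraphs of `G`, so the morphism from `V_Lb` into
it turns `term G' ≤ term G` into `G ⊆ G'`; and `l = term {(l, l)} ≠ term ∅ = ⊤`. -/

variable {Lb : Type}

section Graphs

def verts (E : Set (Lb × Lb)) : Set Lb := {v | (v, v) ∈ E}

def IsReflOnField (E : Set (Lb × Lb)) : Prop :=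
  ∀ v w : Lb, (v, w) ∈ E → (v, v) ∈ E ∧ (w, w) ∈ E

lemma gApp_eq (G G' : Set (Lb × Lb)) :
    gApp G G' = transCl (G ∪ G' ∪ verts G ×ˢ verts G') := rfl

lemma subset_transCl (E : Set (Lb × Lb)) : E ⊆ transCl E :=
  fun _ h => Relation.TransGen.single h

lemma transCl_trans {E : Set (Lb × Lb)} {a b c : Lb} (hab : (a, b) ∈ transCl E)
    (hbc : (b, c) ∈ transCl E) : (a, c) ∈ transCl E :=
  Relation.TransGen.trans hab hbc

lemma transCl_subset_iff {E F : Set (Lb × Lb)}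
    (hF : ∀ a b c : Lb, (a, b) ∈ F → (b, c) ∈ F → (a, c) ∈ F) : transCl E ⊆ F ↔ E ⊆ F := by
  refine ⟨(subset_transCl E).trans, fun hEF ⟨a, b⟩ hab => ?_⟩
  change Relation.TransGen (fun a b => (a, b) ∈ E) a b at hab
  induction hab with
  | single h => exact hEF h
  | tail _ h ih => exact hF _ _ _ ih (hEF h)

lemma IsReflOnField.union {E F : Set (Lb × Lb)} (hE : IsReflOnField E) (hF : IsReflOnField F) :
    IsReflOnField (E ∪ F) := by
  rintro v w (h | h)
  · exact ⟨Or.inl (hE v w h).1, Or.inl (hE v w h).2⟩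
  · exact ⟨Or.inr (hF v w h).1, Or.inr (hF v w h).2⟩

lemma IsReflOnField.iUnion {ι : Sort*} {D : ι → Set (Lb × Lb)} (hD : ∀ i, IsReflOnField (D i)) :
    IsReflOnField (⋃ i, D i) := by
  intro v w h
  obtain ⟨i, hi⟩ := Set.mem_iUnion.1 h
  exact ⟨Set.mem_iUnion.2 ⟨i, (hD i v w hi).1⟩, Set.mem_iUnion.2 ⟨i, (hD i v w hi).2⟩⟩

lemma IsReflOnField.transCl_subset_prod {E : Set (Lb × Lb)} (hE : IsReflOnField E) :
    transCl E ⊆ verts E ×ˢ verts E :=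
  (transCl_subset_iff fun _ _ _ hab hbc => Set.mk_mem_prod hab.1 hbc.2).2 fun ⟨v, w⟩ h => hE v w h

lemma IsReflOnField.verts_transCl {E : Set (Lb × Lb)} (hE : IsReflOnField E) :
    verts (transCl E) = verts E :=
  Set.Subset.antisymm (fun _ h => (hE.transCl_subset_prod h).1) fun _ h => subset_transCl E h

lemma IsReflOnField.isCGraph_transCl {E : Set (Lb × Lb)} (hE : IsReflOnField E) :
    IsCGraph (transCl E) :=
  ⟨fun _ _ h => ⟨subset_transCl E (hE.transCl_subset_prod h).1,
    subset_transCl E (hE.transCl_subset_prod h).2⟩, fun _ _ _ => transCl_trans⟩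

lemma IsCGraph.isReflOnField {G : Set (Lb × Lb)} (hG : IsCGraph G) : IsReflOnField G := hG.1

lemma verts_iUnion {ι : Sort*} (D : ι → Set (Lb × Lb)) : verts (⋃ i, D i) = ⋃ i, verts (D i) := by
  ext; simp [verts]

lemma isCGraph_empty : IsCGraph (∅ : Set (Lb × Lb)) :=
  ⟨fun _ _ h => h.elim, fun _ _ _ h => h.elim⟩

lemma isCGraph_singleton (l : Lb) : IsCGraph {(l, l)} := by
  constructor <;> simp +contextual

lemma verts_singleton (l : Lb) : verts {(l, l)} = {l} := by
  ext; simp [verts]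

lemma isReflOnField_gApp_generators {G G' : Set (Lb × Lb)} (hG : IsReflOnField G)
    (hG' : IsReflOnField G') : IsReflOnField (G ∪ G' ∪ verts G ×ˢ verts G') := by
  rintro v w ((h | h) | ⟨hv, hw⟩)
  · exact ⟨Or.inl (Or.inl (hG v w h).1), Or.inl (Or.inl (hG v w h).2)⟩
  · exact ⟨Or.inl (Or.inr (hG' v w h).1), Or.inl (Or.inr (hG' v w h).2)⟩
  · exact ⟨Or.inl (Or.inl hv), Or.inl (Or.inr hw)⟩

lemma isCGraph_gApp {G G' : Set (Lb × Lb)} (hG : IsCGraph G) (hG' : IsCGraph G') :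
    IsCGraph (gApp G G') :=
  (isReflOnField_gApp_generators hG.isReflOnField hG'.isReflOnField).isCGraph_transCl

lemma verts_gApp {G G' : Set (Lb × Lb)} (hG : IsReflOnField G) (hG' : IsReflOnField G') :
    verts (gApp G G') = verts G ∪ verts G' := by
  rw [gApp_eq, (isReflOnField_gApp_generators hG hG').verts_transCl]
  ext v
  simp only [verts, Set.mem_union, Set.mem_ofPred_eq, Set.mem_prod]
  tauto

lemma gApp_subset_iff {G G' K : Set (Lb × Lb)} (hK : IsCGraph K) :
    gApp G G' ⊆ K ↔ G ⊆ K ∧ G' ⊆ K ∧ verts G ×ˢ verts G' ⊆ K := by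
  rw [gApp_eq, transCl_subset_iff hK.2, Set.union_subset_iff, Set.union_subset_iff, and_assoc]

lemma subset_gApp_left (G G' : Set (Lb × Lb)) : G ⊆ gApp G G' :=
  Set.subset_union_left.trans (Set.subset_union_left.trans (subset_transCl _))

lemma subset_gApp_right (G G' : Set (Lb × Lb)) : G' ⊆ gApp G G' :=
  Set.subset_union_right.trans (Set.subset_union_left.trans (subset_transCl _))

lemma gApp_mono {G₁ G₂ G₁' G₂' : Set (Lb × Lb)} (h : G₁ ⊆ G₂) (h' : G₁' ⊆ G₂') :
    gApp G₁ G₁' ⊆ gApp G₂ G₂' := by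
  rw [gApp_eq, gApp_eq]
  exact (transCl_subset_iff fun _ _ _ => transCl_trans).2 <|
    (Set.union_subset_union (Set.union_subset_union h h')
      (Set.prod_mono (fun _ hv => h hv) fun _ hv => h' hv)).trans (subset_transCl _)

lemma gApp_singleton_subset_iff {K : Set (Lb × Lb)} (hK : IsCGraph K) (a b : Lb) :
    gApp {(a, a)} {(b, b)} ⊆ K ↔ (a, b) ∈ K := by
  simp only [gApp_subset_iff hK, verts_singleton, Set.singleton_prod_singleton,
    Set.singleton_subset_iff]
  exact ⟨fun h => h.2.2, fun h => ⟨(hK.1 a b h).1, (hK.1 a b h).2, h⟩⟩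

lemma IsCGraph.eq_of_subset_iff {X Y : Set (Lb × Lb)} (hX : IsCGraph X) (hY : IsCGraph Y)
    (h : ∀ K, IsCGraph K → (X ⊆ K ↔ Y ⊆ K)) : X = Y :=
  ((h Y hY).2 subset_rfl).antisymm ((h X hX).1 subset_rfl)

lemma gApp_assoc {G G' G'' : Set (Lb × Lb)} (hG : IsCGraph G) (hG' : IsCGraph G')
    (hG'' : IsCGraph G'') : gApp (gApp G G') G'' = gApp G (gApp G' G'') := by
  refine (isCGraph_gApp (isCGraph_gApp hG hG') hG'').eq_of_subset_iff
    (isCGraph_gApp hG (isCGraph_gApp hG' hG'')) fun K hK => ?_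
  simp only [gApp_subset_iff hK, verts_gApp hG.isReflOnField hG'.isReflOnField,
    verts_gApp hG'.isReflOnField hG''.isReflOnField,
    Set.union_prod, Set.prod_union, Set.union_subset_iff]
  tauto

/-- Paths through a vertex of `G'` supply the edges from `G` to `G''`. -/
lemma gApp_gApp_of_nonempty {G G' G'' : Set (Lb × Lb)} (hG : IsCGraph G) (hG' : IsCGraph G')
    (hG'' : IsCGraph G'') (hne : G'.Nonempty) :
    gApp (gApp G G') G'' = transCl (gApp G G' ∪ gApp G' G'') := by
  refine (isCGraph_gApp (isCGraph_gApp hG hG') hG'').eq_of_subset_iff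
    ((isCGraph_gApp hG hG').isReflOnField.union
      (isCGraph_gApp hG' hG'').isReflOnField).isCGraph_transCl
    fun K hK => ?_
  obtain ⟨x, hx⟩ : (verts G').Nonempty :=
    let ⟨⟨v, _⟩, h⟩ := hne; ⟨v, (hG'.1 _ _ h).1⟩
  simp only [transCl_subset_iff hK.2, Set.union_subset_iff, gApp_subset_iff hK,
    verts_gApp hG.isReflOnField hG'.isReflOnField, Set.union_prod]
  constructor
  · rintro ⟨hGG', hG'', -, hG'G''⟩
    exact ⟨hGG', hGG'.2.1, hG'', hG'G''⟩
  · rintro ⟨hGG', -, hG'', hG'G''⟩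
    refine ⟨hGG', hG'', fun ⟨a, c⟩ ⟨ha, hc⟩ => ?_, hG'G''⟩
    exact hK.2 a x c (hGG'.2.2 ⟨ha, hx⟩) (hG'G'' ⟨hx, hc⟩)

lemma gApp_transCl_iUnion_right {ι : Sort*} [Nonempty ι] (G : Set (Lb × Lb))
    {D : ι → Set (Lb × Lb)} (hG : IsCGraph G) (hD : ∀ i, IsCGraph (D i)) :
    gApp G (transCl (⋃ i, D i)) = transCl (⋃ i, gApp G (D i)) := by
  have hU : IsReflOnField (⋃ i, D i) := IsReflOnField.iUnion fun i => (hD i).isReflOnField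
  refine (isCGraph_gApp hG hU.isCGraph_transCl).eq_of_subset_iff
    (IsReflOnField.iUnion fun i => (isCGraph_gApp hG (hD i)).isReflOnField).isCGraph_transCl
    fun K hK => ?_
  simp only [gApp_subset_iff hK, transCl_subset_iff hK.2, hU.verts_transCl, verts_iUnion,
    Set.iUnion_subset_iff, Set.prod_iUnion, forall_and, forall_const]

lemma gApp_transCl_iUnion_left {ι : Sort*} [Nonempty ι] (G : Set (Lb × Lb))
    {D : ι → Set (Lb × Lb)} (hG : IsCGraph G) (hD : ∀ i, IsCGraph (D i)) :
    gApp (transCl (⋃ i, D i)) G = transCl (⋃ i, gApp (D i) G) := by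
  have hU : IsReflOnField (⋃ i, D i) := IsReflOnField.iUnion fun i => (hD i).isReflOnField
  refine (isCGraph_gApp hU.isCGraph_transCl hG).eq_of_subset_iff
    (IsReflOnField.iUnion fun i => (isCGraph_gApp (hD i) hG).isReflOnField).isCGraph_transCl
    fun K hK => ?_
  simp only [gApp_subset_iff hK, transCl_subset_iff hK.2, hU.verts_transCl, verts_iUnion,
    Set.iUnion_subset_iff, Set.iUnion_prod_const, forall_and, forall_const]

end Graphs

section Term

variable {V : Type} [CompletelyDistribLattice V] [CausalOps Lb V]

variable (Lb V) in
def edgeVal (p : Lb × Lb) : V := capp Lb (clabel Lb V p.1) (clabel Lb V p.2)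

lemma termV_eq_sInf (G : Set (Lb × Lb)) : termV Lb V G = sInf (edgeVal Lb V '' G) := rfl

lemma isCause_edgeVal (p : Lb × Lb) : IsCause Lb (edgeVal Lb V p) :=
  .app _ _ (.label p.1) (.label p.2)

lemma isCause_termV (G : Set (Lb × Lb)) : IsCause Lb (termV Lb V G) :=
  .inf _ (Set.forall_mem_image.2 fun p _ => isCause_edgeVal p)

lemma termV_le_edgeVal {G : Set (Lb × Lb)} {p : Lb × Lb} (hp : p ∈ G) :
    termV Lb V G ≤ edgeVal Lb V p :=
  sInf_le ⟨p, hp, rfl⟩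

lemma le_termV_iff {G : Set (Lb × Lb)} {x : V} :
    x ≤ termV Lb V G ↔ ∀ p ∈ G, x ≤ edgeVal Lb V p := by
  rw [termV_eq_sInf, le_sInf_iff, Set.forall_mem_image]

lemma termV_antitone {G G' : Set (Lb × Lb)} (h : G ⊆ G') : termV Lb V G' ≤ termV Lb V G :=
  sInf_le_sInf (Set.image_mono h)

lemma termV_empty : termV Lb V (∅ : Set (Lb × Lb)) = ⊤ := by
  rw [termV_eq_sInf, Set.image_empty, sInf_empty]

lemma termV_union (G G' : Set (Lb × Lb)) :
    termV Lb V (G ∪ G') = termV Lb V G ⊓ termV Lb V G' := by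
  rw [termV_eq_sInf, Set.image_union, sInf_union]; rfl

lemma termV_iUnion {ι : Sort*} (D : ι → Set (Lb × Lb)) :
    termV Lb V (⋃ i, D i) = ⨅ i, termV Lb V (D i) := by
  simp only [termV_eq_sInf, sInf_image, iInf_iUnion]

end Term

section CausalAlgebra

variable {V : Type} [CompletelyDistribLattice V] [CausalOps Lb V] [CausalAlgebra Lb V]

lemma capp_le_left (t u : V) : capp Lb t u ≤ t :=
  sup_eq_left.1 <| by
    simpa only [CausalAlgebra.top_capp] using CausalAlgebra.absorb_sup (Lb := Lb) t ⊤ u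

lemma capp_le_right (t u : V) : capp Lb t u ≤ u :=
  sup_eq_left.1 <| by
    simpa only [CausalAlgebra.capp_top] using CausalAlgebra.absorb_sup (Lb := Lb) u t ⊤

lemma capp_mono {t t' u u' : V} (ht : t ≤ t') (hu : u ≤ u') : capp Lb t u ≤ capp Lb t' u' :=
  calc capp Lb t u ≤ ⨆ x ∈ ({t, t'} : Set V), capp Lb x u := le_iSup₂_of_le t (by simp) le_rfl
    _ = capp Lb t' u := by rw [← CausalAlgebra.sSup_capp, sSup_pair, sup_eq_right.2 ht]
    _ ≤ ⨆ x ∈ ({u, u'} : Set V), capp Lb t' x := le_iSup₂_of_le u (by simp) le_rfl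
    _ = capp Lb t' u' := by rw [← CausalAlgebra.capp_sSup, sSup_pair, sup_eq_right.2 hu]

lemma edgeVal_self (l : Lb) : edgeVal Lb V (l, l) = clabel Lb V l :=
  CausalAlgebra.label_idem l

lemma edgeVal_inf_edgeVal_le {a b c : Lb} (hb : clabel Lb V b ≠ ⊤) :
    edgeVal Lb V (a, b) ⊓ edgeVal Lb V (b, c) ≤ edgeVal Lb V (a, c) :=
  calc edgeVal Lb V (a, b) ⊓ edgeVal Lb V (b, c)
      = capp Lb (capp Lb (clabel Lb V a) (clabel Lb V b)) (clabel Lb V c) :=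
        (CausalAlgebra.cause_capp_capp _ _ _ (.label a) (.label b) (.label c) hb).symm
    _ = capp Lb (clabel Lb V a) (edgeVal Lb V (b, c)) := (CausalAlgebra.capp_assoc _ _ _).symm
    _ ≤ edgeVal Lb V (a, c) := capp_mono le_rfl (capp_le_right _ _)

lemma capp_edgeVal_edgeVal {a b c d : Lb} (hb : clabel Lb V b ≠ ⊤) (hc : clabel Lb V c ≠ ⊤) :
    capp Lb (edgeVal Lb V (a, b)) (edgeVal Lb V (c, d)) =
      edgeVal Lb V (a, b) ⊓ edgeVal Lb V (b, d) ⊓ (edgeVal Lb V (b, c) ⊓ edgeVal Lb V (c, d)) :=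
  calc capp Lb (edgeVal Lb V (a, b)) (edgeVal Lb V (c, d))
      = capp Lb (capp Lb (edgeVal Lb V (a, b)) (clabel Lb V c)) (clabel Lb V d) :=
        CausalAlgebra.capp_assoc _ _ _
    _ = capp Lb (edgeVal Lb V (a, b) ⊓ edgeVal Lb V (b, c)) (clabel Lb V d) := by
        rw [edgeVal, CausalAlgebra.cause_capp_capp _ _ _ (.label a) (.label b) (.label c) hb]; rfl
    _ = capp Lb (edgeVal Lb V (a, b)) (clabel Lb V d) ⊓
          capp Lb (edgeVal Lb V (b, c)) (clabel Lb V d) :=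
        CausalAlgebra.cause_inf_capp _ _ _ (isCause_edgeVal _) (isCause_edgeVal _) (.label d)
    _ = _ := by
        rw [edgeVal, edgeVal,
          CausalAlgebra.cause_capp_capp _ _ _ (.label a) (.label b) (.label d) hb,
          CausalAlgebra.cause_capp_capp _ _ _ (.label b) (.label c) (.label d) hc]
        rfl

lemma termV_singleton (l : Lb) : termV Lb V {(l, l)} = clabel Lb V l := by
  rw [termV_eq_sInf, Set.image_singleton, sInf_singleton, edgeVal_self]

lemma termV_transCl (hlab : ∀ l : Lb, clabel Lb V l ≠ ⊤) (E : Set (Lb × Lb)) :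
    termV Lb V (transCl E) = termV Lb V E := by
  refine (termV_antitone (subset_transCl E)).antisymm (le_termV_iff.2 fun p hp => ?_)
  have htrans : ∀ a b c : Lb, termV Lb V E ≤ edgeVal Lb V (a, b) →
      termV Lb V E ≤ edgeVal Lb V (b, c) → termV Lb V E ≤ edgeVal Lb V (a, c) :=
    fun a b c hab hbc => (le_inf hab hbc).trans (edgeVal_inf_edgeVal_le (hlab b))
  exact (transCl_subset_iff (F := {p | termV Lb V E ≤ edgeVal Lb V p}) htrans).2
    (fun _ => termV_le_edgeVal) hp

lemma le_capp_termV {x : V} {G G' : Set (Lb × Lb)} (hG : x ≤ termV Lb V G)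
    (hG' : x ≤ termV Lb V G')
    (h : ∀ p ∈ G, ∀ q ∈ G', x ≤ capp Lb (edgeVal Lb V p) (edgeVal Lb V q)) :
    x ≤ capp Lb (termV Lb V G) (termV Lb V G') := by
  rcases G.eq_empty_or_nonempty with rfl | hne
  · rwa [termV_empty, CausalAlgebra.top_capp]
  rcases G'.eq_empty_or_nonempty with rfl | hne'
  · rwa [termV_empty, CausalAlgebra.capp_top]
  rw [termV_eq_sInf, CausalAlgebra.cause_sInf_capp _ _
    (Set.forall_mem_image.2 fun p _ => isCause_edgeVal p) (isCause_termV G') (hne.image _)]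
  refine le_iInf₂ (Set.forall_mem_image.2 fun p hp => ?_)
  rw [termV_eq_sInf, CausalAlgebra.cause_capp_sInf _ _ (isCause_edgeVal p)
    (Set.forall_mem_image.2 fun q _ => isCause_edgeVal q) (hne'.image _)]
  exact le_iInf₂ (Set.forall_mem_image.2 (h p hp))

lemma termV_gApp (hlab : ∀ l : Lb, clabel Lb V l ≠ ⊤) {G G' : Set (Lb × Lb)} (hG : IsCGraph G)
    (hG' : IsCGraph G') :
    termV Lb V (gApp G G') = capp Lb (termV Lb V G) (termV Lb V G') := by
  rw [gApp_eq, termV_transCl hlab, termV_union, termV_union]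
  set cross := verts G ×ˢ verts G'
  refine le_antisymm (le_capp_termV (inf_le_left.trans inf_le_left)
    (inf_le_left.trans inf_le_right) ?_) ?_
  · rintro ⟨a, b⟩ hab ⟨c, d⟩ hcd
    have hb : b ∈ verts G := (hG.1 a b hab).2
    have hc : c ∈ verts G' := (hG'.1 c d hcd).1
    have hbd : (b, d) ∈ cross := ⟨hb, (hG'.1 c d hcd).2⟩
    rw [capp_edgeVal_edgeVal (hlab b) (hlab c)]
    refine le_inf (le_inf ?_ ?_) (le_inf ?_ ?_)
    · exact inf_le_left.trans (inf_le_left.trans (termV_le_edgeVal hab))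
    · exact inf_le_right.trans (termV_le_edgeVal hbd)
    · exact inf_le_right.trans (termV_le_edgeVal (show (b, c) ∈ cross from ⟨hb, hc⟩))
    · exact inf_le_left.trans (inf_le_right.trans (termV_le_edgeVal hcd))
  · refine le_inf (le_inf (capp_le_left _ _) (capp_le_right _ _)) (le_termV_iff.2 ?_)
    rintro ⟨u, w⟩ ⟨hu, hw⟩
    calc capp Lb (termV Lb V G) (termV Lb V G')
        ≤ capp Lb (edgeVal Lb V (u, u)) (edgeVal Lb V (w, w)) :=
          capp_mono (termV_le_edgeVal hu) (termV_le_edgeVal hw)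
      _ = edgeVal Lb V (u, w) := by rw [edgeVal_self, edgeVal_self]; rfl

theorem exists_termV_eq (hlab : ∀ l : Lb, clabel Lb V l ≠ ⊤) {v : V} (hv : IsCause Lb v) :
    ∃ G, IsCGraph G ∧ termV Lb V G = v := by
  induction hv with
  | label l => exact ⟨_, isCGraph_singleton l, termV_singleton l⟩
  | inf S _ ih =>
    choose G hG hGv using ih
    refine ⟨transCl (⋃ (v) (hv : v ∈ S), G v hv),
      (IsReflOnField.iUnion fun v => .iUnion fun hv => (hG v hv).isReflOnField).isCGraph_transCl,
      ?_⟩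
    simp only [termV_transCl hlab, termV_iUnion, hGv, sInf_eq_iInf]
  | app _ _ _ _ iht ihu =>
    obtain ⟨G, hG, rfl⟩ := iht
    obtain ⟨G', hG', rfl⟩ := ihu
    exact ⟨gApp G G', isCGraph_gApp hG hG', termV_gApp hlab hG hG'⟩

end CausalAlgebra

section Hom

variable {V W : Type} [CompletelyDistribLattice V] [CausalOps Lb V]
  [CompletelyDistribLattice W] [CausalOps Lb W] {φ : V → W}

lemma IsCausalHom.monotone (hφ : IsCausalHom Lb φ) : Monotone φ := fun a b hab => by
  have h := hφ.1 {a, b}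
  rw [sSup_pair, sup_eq_right.2 hab, Set.image_pair, sSup_pair] at h
  exact h ▸ le_sup_left

lemma IsCausalHom.map_termV (hφ : IsCausalHom Lb φ) (G : Set (Lb × Lb)) :
    φ (termV Lb V G) = termV Lb W G := by
  obtain ⟨-, hinf, happ, hlabel⟩ := hφ
  simp only [termV, hinf, Set.image_image, happ, hlabel]

end Hom

/-- Causal graphs ordered by reverse inclusion, so that the supergraphs of a graph form a lower
set. -/
def CGraph (Lb : Type) : Type := {G : Set (Lb × Lb) // IsCGraph G}

instance : PartialOrder (CGraph Lb) where
  le G H := H.1 ⊆ G.1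
  le_refl _ := subset_rfl
  le_trans _ _ _ h₁ h₂ := h₂.trans h₁
  le_antisymm _ _ h₁ h₂ := Subtype.ext (h₂.antisymm h₁)

abbrev GraphValue (Lb : Type) : Type := LowerSet (CGraph Lb)

namespace GraphValue

def supergraphs (X : Set (Lb × Lb)) : GraphValue Lb :=
  ⟨{K | X ⊆ K.1}, fun _ _ hKK' (hK : X ⊆ _) => Set.Subset.trans hK hKK'⟩

instance : CausalOps Lb (GraphValue Lb) where
  capp U U' := ⟨{K | ∃ G ∈ U, ∃ G' ∈ U', gApp G.1 G'.1 ⊆ K.1},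
    fun _ _ hKK' ⟨G, hG, G', hG', hK⟩ => ⟨G, hG, G', hG', Set.Subset.trans hK hKK'⟩⟩
  clabel l := supergraphs {(l, l)}

variable {X Y : Set (Lb × Lb)} {U U' : GraphValue Lb} {K : CGraph Lb}

lemma mem_supergraphs : K ∈ supergraphs X ↔ X ⊆ K.1 := Iff.rfl

lemma mem_capp : K ∈ capp Lb U U' ↔ ∃ G ∈ U, ∃ G' ∈ U', gApp G.1 G'.1 ⊆ K.1 := Iff.rfl

lemma clabel_eq (l : Lb) : clabel Lb (GraphValue Lb) l = supergraphs {(l, l)} := rfl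

lemma supergraphs_empty : supergraphs (∅ : Set (Lb × Lb)) = ⊤ :=
  SetLike.ext fun _ => iff_of_true (Set.empty_subset _) LowerSet.mem_top

lemma supergraphs_union (X Y : Set (Lb × Lb)) :
    supergraphs (X ∪ Y) = supergraphs X ⊓ supergraphs Y :=
  SetLike.ext fun _ => Set.union_subset_iff

lemma supergraphs_iUnion {ι : Sort*} (X : ι → Set (Lb × Lb)) :
    supergraphs (⋃ i, X i) = ⨅ i, supergraphs (X i) :=
  SetLike.ext fun _ => by
    simp only [mem_supergraphs, Set.iUnion_subset_iff, LowerSet.mem_iInf_iff]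

lemma supergraphs_transCl (X : Set (Lb × Lb)) : supergraphs (transCl X) = supergraphs X :=
  SetLike.ext fun K => transCl_subset_iff K.2.2

lemma subset_of_supergraphs_le (hY : IsCGraph Y) (h : supergraphs Y ≤ supergraphs X) :
    X ⊆ Y :=
  h (mem_supergraphs.2 subset_rfl : (⟨Y, hY⟩ : CGraph Lb) ∈ supergraphs Y)

lemma capp_supergraphs (hX : IsCGraph X) (hY : IsCGraph Y) :
    capp Lb (supergraphs X) (supergraphs Y) = supergraphs (gApp X Y) :=
  SetLike.ext fun _ => by
    rw [mem_capp, mem_supergraphs]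
    exact ⟨fun ⟨_, hG, _, hG', hK⟩ => (gApp_mono hG hG').trans hK, fun hK =>
      ⟨⟨X, hX⟩, mem_supergraphs.2 subset_rfl, ⟨Y, hY⟩, mem_supergraphs.2 subset_rfl, hK⟩⟩

lemma exists_eq_supergraphs_of_isCause (hU : IsCause Lb U) :
    ∃ X, IsCGraph X ∧ U = supergraphs X := by
  induction hU with
  | label l => exact ⟨_, isCGraph_singleton l, rfl⟩
  | inf S _ ih =>
    choose X hX hXU using ih
    refine ⟨transCl (⋃ (U) (hU : U ∈ S), X U hU),
      (IsReflOnField.iUnion fun U => .iUnion fun hU => (hX U hU).isReflOnField).isCGraph_transCl,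
      ?_⟩
    simp only [supergraphs_transCl, supergraphs_iUnion, ← hXU, sInf_eq_iInf]
  | app _ _ _ _ ihX ihY =>
    obtain ⟨X, hX, rfl⟩ := ihX
    obtain ⟨Y, hY, rfl⟩ := ihY
    exact ⟨gApp X Y, isCGraph_gApp hX hY, capp_supergraphs hX hY⟩

lemma capp_le_left (U U' : GraphValue Lb) : capp Lb U U' ≤ U :=
  fun K ⟨G, hG, _, _, hK⟩ => U.lower (show K ≤ G from (subset_gApp_left _ _).trans hK) hG

lemma capp_le_right (U U' : GraphValue Lb) : capp Lb U U' ≤ U' :=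
  fun K ⟨_, _, G', hG', hK⟩ => U'.lower (show K ≤ G' from (subset_gApp_right _ _).trans hK) hG'

lemma capp_assoc (t u w : GraphValue Lb) :
    capp Lb t (capp Lb u w) = capp Lb (capp Lb t u) w := by
  refine SetLike.ext fun K => ⟨?_, ?_⟩
  · rintro ⟨G, hG, M, ⟨G', hG', G'', hG'', hM⟩, hK⟩
    refine ⟨⟨gApp G.1 G'.1, isCGraph_gApp G.2 G'.2⟩, ⟨G, hG, G', hG', subset_rfl⟩, G'', hG'', ?_⟩
    rw [gApp_assoc G.2 G'.2 G''.2]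
    exact (gApp_mono subset_rfl hM).trans hK
  · rintro ⟨M, ⟨G, hG, G', hG', hM⟩, G'', hG'', hK⟩
    refine ⟨G, hG, ⟨gApp G'.1 G''.1, isCGraph_gApp G'.2 G''.2⟩,
      ⟨G', hG', G'', hG'', subset_rfl⟩, ?_⟩
    rw [← gApp_assoc G.2 G'.2 G''.2]
    exact (gApp_mono hM subset_rfl).trans hK

lemma top_capp (U : GraphValue Lb) : capp Lb ⊤ U = U :=
  (capp_le_right _ _).antisymm fun K hK => ⟨⟨∅, isCGraph_empty⟩, LowerSet.mem_top, K, hK,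
    (gApp_subset_iff K.2).2 ⟨Set.empty_subset _, subset_rfl, by simp [verts]⟩⟩

lemma capp_top (U : GraphValue Lb) : capp Lb U ⊤ = U :=
  (capp_le_left _ _).antisymm fun K hK => ⟨K, hK, ⟨∅, isCGraph_empty⟩, LowerSet.mem_top,
    (gApp_subset_iff K.2).2 ⟨subset_rfl, Set.empty_subset _, by simp [verts]⟩⟩

lemma capp_sSup (U : GraphValue Lb) (S : Set (GraphValue Lb)) :
    capp Lb U (sSup S) = ⨆ U' ∈ S, capp Lb U U' :=
  SetLike.ext fun _ => by
    simp only [mem_capp, LowerSet.mem_sSup_iff, LowerSet.mem_iSup₂_iff]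
    grind

lemma sSup_capp (S : Set (GraphValue Lb)) (U : GraphValue Lb) :
    capp Lb (sSup S) U = ⨆ U' ∈ S, capp Lb U' U :=
  SetLike.ext fun _ => by
    simp only [mem_capp, LowerSet.mem_sSup_iff, LowerSet.mem_iSup₂_iff]
    grind

lemma capp_bot (U : GraphValue Lb) : capp Lb U ⊥ = ⊥ :=
  eq_bot_iff.2 fun _ ⟨_, _, _, h, _⟩ => absurd h LowerSet.notMem_bot

lemma bot_capp (U : GraphValue Lb) : capp Lb ⊥ U = ⊥ :=
  eq_bot_iff.2 fun _ ⟨_, h, _⟩ => absurd h LowerSet.notMem_bot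

lemma label_idem (l : Lb) :
    capp Lb (clabel Lb (GraphValue Lb) l) (clabel Lb (GraphValue Lb) l) = clabel Lb _ l := by
  rw [clabel_eq, capp_supergraphs (isCGraph_singleton l) (isCGraph_singleton l)]
  exact SetLike.ext fun K => (gApp_singleton_subset_iff K.2 l l).trans Set.singleton_subset_iff.symm

lemma capp_capp_supergraphs {Z : Set (Lb × Lb)} (hX : IsCGraph X) (hY : IsCGraph Y)
    (hZ : IsCGraph Z) (hY_ne : supergraphs Y ≠ ⊤) :
    capp Lb (capp Lb (supergraphs X) (supergraphs Y)) (supergraphs Z) =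
      capp Lb (supergraphs X) (supergraphs Y) ⊓ capp Lb (supergraphs Y) (supergraphs Z) := by
  have hne : Y.Nonempty := Set.nonempty_iff_ne_empty.2 fun h => hY_ne (h ▸ supergraphs_empty)
  rw [capp_supergraphs hX hY, capp_supergraphs (isCGraph_gApp hX hY) hZ, capp_supergraphs hY hZ,
    gApp_gApp_of_nonempty hX hY hZ hne, supergraphs_transCl, supergraphs_union]

lemma capp_supergraphs_iInf {ι : Sort*} [Nonempty ι] (hX : IsCGraph X) {Y : ι → Set (Lb × Lb)}
    (hY : ∀ i, IsCGraph (Y i)) :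
    capp Lb (supergraphs X) (⨅ i, supergraphs (Y i)) =
      ⨅ i, capp Lb (supergraphs X) (supergraphs (Y i)) := by
  have hU := (IsReflOnField.iUnion fun i => (hY i).isReflOnField).isCGraph_transCl
  rw [← supergraphs_iUnion, ← supergraphs_transCl (⋃ i, Y i), capp_supergraphs hX hU,
    gApp_transCl_iUnion_right X hX hY, supergraphs_transCl, supergraphs_iUnion]
  simp only [capp_supergraphs hX (hY _)]

lemma iInf_supergraphs_capp {ι : Sort*} [Nonempty ι] (hX : IsCGraph X) {Y : ι → Set (Lb × Lb)}
    (hY : ∀ i, IsCGraph (Y i)) :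
    capp Lb (⨅ i, supergraphs (Y i)) (supergraphs X) =
      ⨅ i, capp Lb (supergraphs (Y i)) (supergraphs X) := by
  have hU := (IsReflOnField.iUnion fun i => (hY i).isReflOnField).isCGraph_transCl
  rw [← supergraphs_iUnion, ← supergraphs_transCl (⋃ i, Y i), capp_supergraphs hU hX,
    gApp_transCl_iUnion_left X hX hY, supergraphs_transCl, supergraphs_iUnion]
  simp only [capp_supergraphs (hY _) hX]

lemma capp_sInf {c : GraphValue Lb} {S : Set (GraphValue Lb)} (hc : IsCause Lb c)
    (hS : ∀ d ∈ S, IsCause Lb d) (hne : S.Nonempty) :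
    capp Lb c (sInf S) = ⨅ d ∈ S, capp Lb c d := by
  obtain ⟨X, hX, rfl⟩ := exists_eq_supergraphs_of_isCause hc
  choose Y hY hYd using fun d : S => exists_eq_supergraphs_of_isCause (hS d d.2)
  have := hne.to_subtype
  rw [sInf_eq_iInf', iInf_subtype']
  simp only [hYd]
  exact capp_supergraphs_iInf hX hY

lemma sInf_capp {e : GraphValue Lb} {S : Set (GraphValue Lb)} (hS : ∀ d ∈ S, IsCause Lb d)
    (he : IsCause Lb e) (hne : S.Nonempty) :
    capp Lb (sInf S) e = ⨅ d ∈ S, capp Lb d e := by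
  obtain ⟨X, hX, rfl⟩ := exists_eq_supergraphs_of_isCause he
  choose Y hY hYd using fun d : S => exists_eq_supergraphs_of_isCause (hS d d.2)
  have := hne.to_subtype
  rw [sInf_eq_iInf', iInf_subtype']
  simp only [hYd]
  exact iInf_supergraphs_capp hX hY

lemma forall_mem_pair_isCause {d e : GraphValue Lb} (hd : IsCause Lb d) (he : IsCause Lb e) :
    ∀ x ∈ ({d, e} : Set (GraphValue Lb)), IsCause Lb x := by
  rintro _ (rfl | rfl) <;> assumption

instance : CausalAlgebra Lb (GraphValue Lb) where
  capp_assoc := capp_assoc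
  absorb_sup _ _ _ := sup_eq_left.2 ((capp_le_left _ _).trans (capp_le_right _ _))
  absorb_inf _ _ _ := inf_eq_right.2 ((capp_le_left _ _).trans (capp_le_right _ _))
  top_capp := top_capp
  capp_top := capp_top
  capp_bot := capp_bot
  bot_capp := bot_capp
  label_idem := label_idem
  capp_sSup := capp_sSup
  sSup_capp := sSup_capp
  cause_capp_capp c d e hc hd he hd_ne := by
    obtain ⟨X, hX, rfl⟩ := exists_eq_supergraphs_of_isCause hc
    obtain ⟨Y, hY, rfl⟩ := exists_eq_supergraphs_of_isCause hd
    obtain ⟨Z, hZ, rfl⟩ := exists_eq_supergraphs_of_isCause he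
    exact capp_capp_supergraphs hX hY hZ hd_ne
  cause_capp_inf c d e hc hd he := by
    simpa only [sInf_pair, iInf_pair] using
      capp_sInf hc (forall_mem_pair_isCause hd he) (Set.insert_nonempty d {e})
  cause_inf_capp c d e hc hd he := by
    simpa only [sInf_pair, iInf_pair] using
      sInf_capp (forall_mem_pair_isCause hc hd) he (Set.insert_nonempty c {d})
  cause_capp_sInf _ _ := capp_sInf
  cause_sInf_capp _ _ := sInf_capp

lemma termV_eq_supergraphs (G : Set (Lb × Lb)) : termV Lb (GraphValue Lb) G = supergraphs G :=
  SetLike.ext fun K => by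
    simp only [termV, LowerSet.mem_sInf_iff, Set.forall_mem_image, clabel_eq,
      capp_supergraphs (isCGraph_singleton _) (isCGraph_singleton _), mem_supergraphs,
      gApp_singleton_subset_iff K.2]
    rfl

end GraphValue

section ValueAlgebra

variable {V : Type} [CompletelyDistribLattice V] [CausalOps Lb V] [IsValueAlgebra Lb V]

instance IsValueAlgebra.toCausalAlgebra : CausalAlgebra Lb V := IsValueAlgebra.alg

lemma subset_of_termV_le {G G' : Set (Lb × Lb)} (hG' : IsCGraph G')
    (h : termV Lb V G' ≤ termV Lb V G) : G ⊆ G' := by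
  obtain ⟨φ, hφ, -⟩ := IsValueAlgebra.free (Lb := Lb) (V := V) (GraphValue Lb) inferInstance
  have := hφ.monotone h
  rw [hφ.map_termV, hφ.map_termV, GraphValue.termV_eq_supergraphs,
    GraphValue.termV_eq_supergraphs] at this
  exact GraphValue.subset_of_supergraphs_le hG' this

lemma clabel_ne_top (l : Lb) : clabel Lb V l ≠ ⊤ := fun h =>
  subset_of_termV_le (V := V) isCGraph_empty (G := {(l, l)})
    (by rw [termV_singleton, h]; exact le_top) rfl

end ValueAlgebra

/-- Theorem 1: `term : C*_Lb → C_Lb` is an isomorphism between the algebras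
`⟨C*_Lb, *, ·, ∅, ⊆⟩` and `⟨C_Lb, *, ·, 1, ≤⟩`: it maps causal graphs bijectively onto the
causes, sends `∅` to `1 = ⊤`, the product `G * G' = G ∪ G'` to `term G * term G'`, the
application `G · G'` to `term G · term G'`, and `G ⊆ G'` iff `term G' ≤ term G`. -/
theorem term_isomorphism (Lb V : Type) [CompletelyDistribLattice V] [CausalOps Lb V]
    [IsValueAlgebra Lb V] :
    (termV Lb V (∅ : Set (Lb × Lb)) = (⊤ : V)) ∧
    (∀ G G' : Set (Lb × Lb), IsCGraph G → IsCGraph G' →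
      termV Lb V (G ∪ G') = termV Lb V G ⊓ termV Lb V G') ∧
    (∀ G G' : Set (Lb × Lb), IsCGraph G → IsCGraph G' →
      termV Lb V (gApp G G') = capp Lb (termV Lb V G) (termV Lb V G')) ∧
    (∀ G G' : Set (Lb × Lb), IsCGraph G → IsCGraph G' →
      (G ⊆ G' ↔ termV Lb V G' ≤ termV Lb V G)) ∧
    (∀ G : Set (Lb × Lb), IsCGraph G → IsCause Lb (termV Lb V G)) ∧
    (∀ G G' : Set (Lb × Lb), IsCGraph G → IsCGraph G' →
      termV Lb V G = termV Lb V G' → G = G') ∧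
    (∀ v : V, IsCause Lb v → ∃ G : Set (Lb × Lb), IsCGraph G ∧ termV Lb V G = v) := by
  have hlab : ∀ l : Lb, clabel Lb V l ≠ ⊤ := clabel_ne_top
  refine ⟨termV_empty, fun G G' _ _ => termV_union G G',
    fun G G' hG hG' => termV_gApp hlab hG hG', fun G G' _ hG' => ?_,
    fun G _ => isCause_termV G, fun G G' hG hG' h => ?_, fun v => exists_termV_eq hlab⟩
  · exact ⟨termV_antitone, subset_of_termV_le hG'⟩
  · exact (subset_of_termV_le hG' h.ge).antisymm (subset_of_termV_le hG h.le)

end Causal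
end

section
/- Let P be a positive program. A standard interpretation J is a standard stable model of P if and only if there exists a causal stable model I of P such that I^st = J. -/
/-!  Causal values (Cabalar–Fandinno, causal stable models for disjunctive programs).

Causal values are the equivalence classes of terms (built from labels in `Lb` by possibly
infinite products `∏`, possibly infinite sums `∑` and application `·`) under the axioms of a
completely distributive complete lattice (meet `*` = `⊓`/`sInf`, join `+` = `⊔`/`sSup`,
`1` = `⊤` the empty product, `0` = `⊥` the empty sum) together with the axioms for
application listed in the paper.  We formalize "the algebra of causal values `V_Lb`" as a
causal algebra (a completely distributive complete lattice with the extra operations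
satisfying the axioms) that is free/initial, i.e. a quotient of the term algebra by exactly
the equational theory generated by the axioms. -/

open scoped Classical

/-!
Two facts about the free causal algebra carry the proof. Causes are nonzero: map into `Prop`,
reading labels as `True` and application as `∧`. Every nonzero value lies above a cause: the
values that are `0` or above a cause form a causal subalgebra, through which the identity factors
by initiality. Hence meets and applications of nonzero values are nonzero, so in a positive program
the value a rule passes to a head atom is nonzero exactly when its body atoms are true; therefore
`I^st` is a model whenever `I` is, while on standard interpretations `≼` only compares atom sets.
Below a standard stable model `J` there is a `≤`-minimal model `I` (Zorn: the meet of a chain of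
models is a model because heads are finite), and stability of `J` forces `I^st = J` and makes `I`
causal stable; conversely `I^st` inherits stability from `I`.
-/

lemma IsChain.exists_forall_le_of_finite {α : Type*} [Preorder α] {c s : Set α}
    (hc : IsChain (· ≤ ·) c) (hne : c.Nonempty) (hs : s.Finite) (hsc : s ⊆ c) :
    ∃ m ∈ c, ∀ x ∈ s, m ≤ x := by
  obtain rfl | hs_ne := s.eq_empty_or_nonempty
  · obtain ⟨m, hm⟩ := hne
    exact ⟨m, hm, by simp⟩
  obtain ⟨m, hm⟩ := hs.exists_minimal hs_ne
  refine ⟨m, hsc hm.prop, fun x hx => ?_⟩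
  exact (hc.total (hsc hm.prop) (hsc hx)).elim id (hm.le_of_le hx)

lemma IsChain.exists_forall_exists_le_of_finite {α ι : Type*} [Preorder α] {c : Set α}
    (hc : IsChain (· ≤ ·) c) (hne : c.Nonempty) {s : Set ι} (hs : s.Finite) {p : ι → α → Prop}
    (h : ∀ x ∈ c, ∃ i ∈ s, p i x) : ∃ i ∈ s, ∀ x ∈ c, ∃ y ∈ c, y ≤ x ∧ p i y := by
  by_contra! hcon
  have : Nonempty α := ⟨hne.some⟩
  choose! g hgc hg using hcon
  obtain ⟨m, hmc, hm⟩ := hc.exists_forall_le_of_finite hne (hs.image g)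
    (by rintro _ ⟨i, hi, rfl⟩; exact hgc i hi)
  obtain ⟨i, hi, hpi⟩ := h m hmc
  exact hg i hi m hmc (hm _ ⟨i, hi, rfl⟩) hpi

namespace Causal

attribute [instance] IsValueAlgebra.alg

section Algebra

variable {Lb V : Type} [CompletelyDistribLattice V] [CausalOps Lb V]

lemma IsCause.top : IsCause Lb (⊤ : V) :=
  sInf_empty (α := V) ▸ IsCause.inf ∅ (by simp)

lemma exists_isCause_le_sInf {S : Set V} (hS : ∀ v ∈ S, ∃ c, IsCause Lb c ∧ c ≤ v) :
    ∃ c, IsCause Lb c ∧ c ≤ sInf S := by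
  choose! f hfc hfle using hS
  exact ⟨sInf (f '' S), IsCause.inf _ (by rintro _ ⟨v, hv, rfl⟩; exact hfc v hv),
    le_sInf fun v hv => (sInf_le (Set.mem_image_of_mem f hv)).trans (hfle v hv)⟩

variable [CausalAlgebra Lb V]

lemma capp_mono_left {t t' : V} (h : t ≤ t') (u : V) : capp Lb t u ≤ capp Lb t' u := by
  have hpair := CausalAlgebra.sSup_capp (Lb := Lb) ({t, t'} : Set V) u
  rw [sSup_pair, sup_eq_right.mpr h, iSup_pair] at hpair
  exact hpair ▸ le_sup_left

lemma capp_mono_right (t : V) {u u' : V} (h : u ≤ u') : capp Lb t u ≤ capp Lb t u' := by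
  have hpair := CausalAlgebra.capp_sSup (Lb := Lb) t ({u, u'} : Set V)
  rw [sSup_pair, sup_eq_right.mpr h, iSup_pair] at hpair
  exact hpair ▸ le_sup_left

end Algebra

section Hom

variable {Lb V W X : Type} [CompletelyDistribLattice V] [CausalOps Lb V]
  [CompletelyDistribLattice W] [CausalOps Lb W] [CompletelyDistribLattice X] [CausalOps Lb X]

lemma isCausalHom_id : IsCausalHom Lb (id : V → V) :=
  ⟨fun S => by simp, fun S => by simp, fun _ _ => rfl, fun _ => rfl⟩

lemma IsCausalHom.comp {g : W → X} {f : V → W} (hg : IsCausalHom Lb g) (hf : IsCausalHom Lb f) :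
    IsCausalHom Lb (g ∘ f) :=
  ⟨fun S => by simp only [Function.comp_apply, hf.1, hg.1, Set.image_image],
    fun S => by simp only [Function.comp_apply, hf.2.1, hg.2.1, Set.image_image],
    fun t u => by simp only [Function.comp_apply, hf.2.2.1, hg.2.2.1],
    fun l => by simp only [Function.comp_apply, hf.2.2.2, hg.2.2.2]⟩

variable {f : V → W}

lemma IsCausalHom.map_biSup (hf : IsCausalHom Lb f) {ι : Type} (S : Set ι) (g : ι → V) :
    f (⨆ i ∈ S, g i) = ⨆ i ∈ S, f (g i) := by
  rw [← sSup_image, hf.1, Set.image_image, sSup_image]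

lemma IsCausalHom.map_biInf (hf : IsCausalHom Lb f) {ι : Type} (S : Set ι) (g : ι → V) :
    f (⨅ i ∈ S, g i) = ⨅ i ∈ S, f (g i) := by
  rw [← sInf_image, hf.2.1, Set.image_image, sInf_image]

lemma IsCausalHom.map_bot (hf : IsCausalHom Lb f) : f ⊥ = ⊥ := by simpa using hf.1 ∅

lemma IsCausalHom.map_top (hf : IsCausalHom Lb f) : f ⊤ = ⊤ := by simpa using hf.2.1 ∅

lemma IsCausalHom.map_sup (hf : IsCausalHom Lb f) (a b : V) : f (a ⊔ b) = f a ⊔ f b := by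
  simpa [Set.image_pair] using hf.1 {a, b}

lemma IsCausalHom.map_inf (hf : IsCausalHom Lb f) (a b : V) : f (a ⊓ b) = f a ⊓ f b := by
  simpa [Set.image_pair] using hf.2.1 {a, b}

lemma IsCause.map (hf : IsCausalHom Lb f) {c : V} (hc : IsCause Lb c) : IsCause Lb (f c) := by
  induction hc with
  | label l => exact hf.2.2.2 l ▸ IsCause.label l
  | inf S _ ih => exact hf.2.1 S ▸ IsCause.inf _ (by rintro _ ⟨v, hv, rfl⟩; exact ih v hv)
  | app t u _ _ iht ihu => exact hf.2.2.1 t u ▸ IsCause.app _ _ iht ihu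

lemma CausalAlgebra.of_injective [CausalAlgebra Lb W] (hinj : Function.Injective f) (hf : IsCausalHom Lb f) : CausalAlgebra Lb V := by
  have ⟨hsSup, hsInf, happ, hlabel⟩ := hf
  have hcause {c : V} (hc : IsCause Lb c) : IsCause Lb (f c) := hc.map hf
  have hcauses {S : Set V} (hS : ∀ d ∈ S, IsCause Lb d) : ∀ d ∈ f '' S, IsCause Lb d := by
    rintro _ ⟨d, hd, rfl⟩; exact hcause (hS d hd)
  constructor
  · intro t u w; apply hinj; simp only [happ]; exact CausalAlgebra.capp_assoc ..
  · intro t u w; apply hinj; simp only [happ, hf.map_sup]; exact CausalAlgebra.absorb_sup ..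
  · intro t u w; apply hinj; simp only [happ, hf.map_inf]; exact CausalAlgebra.absorb_inf ..
  · intro t; apply hinj; simp only [happ, hf.map_top]; exact CausalAlgebra.top_capp ..
  · intro t; apply hinj; simp only [happ, hf.map_top]; exact CausalAlgebra.capp_top ..
  · intro t; apply hinj; simp only [happ, hf.map_bot]; exact CausalAlgebra.capp_bot ..
  · intro t; apply hinj; simp only [happ, hf.map_bot]; exact CausalAlgebra.bot_capp ..
  · intro l; apply hinj; simp only [happ, hlabel]; exact CausalAlgebra.label_idem ..
  · intro t S; apply hinj
    simp only [happ, hsSup, hf.map_biSup]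
    exact (CausalAlgebra.capp_sSup ..).trans iSup_image
  · intro S t; apply hinj
    simp only [happ, hsSup, hf.map_biSup]
    exact (CausalAlgebra.sSup_capp ..).trans iSup_image
  · intro c d e hc hd he hd_top; apply hinj
    simp only [happ, hf.map_inf]
    exact CausalAlgebra.cause_capp_capp _ _ _ (hcause hc) (hcause hd) (hcause he)
      fun h => hd_top (hinj (h.trans hf.map_top.symm))
  · intro c d e hc hd he; apply hinj
    simp only [happ, hf.map_inf]
    exact CausalAlgebra.cause_capp_inf _ _ _ (hcause hc) (hcause hd) (hcause he)
  · intro c d e hc hd he; apply hinj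
    simp only [happ, hf.map_inf]
    exact CausalAlgebra.cause_inf_capp _ _ _ (hcause hc) (hcause hd) (hcause he)
  · intro c S hc hS hne; apply hinj
    simp only [happ, hsInf, hf.map_biInf]
    exact (CausalAlgebra.cause_capp_sInf _ _ (hcause hc) (hcauses hS) (hne.image f)).trans
      iInf_image
  · intro S e hS he hne; apply hinj
    simp only [happ, hsInf, hf.map_biInf]
    exact (CausalAlgebra.cause_sInf_capp _ _ (hcauses hS) (hcause he) (hne.image f)).trans
      iInf_image

end Hom

instance causalOpsProp (Lb : Type) : CausalOps Lb Prop where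
  capp p q := p ∧ q
  clabel _ := True

instance causalAlgebraProp (Lb : Type) : CausalAlgebra Lb Prop := by
  constructor <;>
    simp only [capp, clabel, CausalOps.capp, CausalOps.clabel, eq_iff_iff, inf_Prop_eq,
      sup_Prop_eq, sSup_Prop_eq, sInf_Prop_eq, iSup_Prop_eq, iInf_Prop_eq] <;>
    intros <;>
    try tauto
  case cause_capp_sInf hne => obtain ⟨x, hx⟩ := hne; grind
  case cause_sInf_capp hne => obtain ⟨x, hx⟩ := hne; grind

lemma IsCause.prop {Lb : Type} {p : Prop} (hp : IsCause Lb p) : p := by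
  induction hp with
  | label => trivial
  | inf S _ ih => exact fun q hq => ih q hq
  | app _ _ _ _ iht ihu => exact ⟨iht, ihu⟩

section CausedSublattice

variable {Lb V : Type} [CompletelyDistribLattice V] [CausalOps Lb V]

variable (Lb V)

def causedSublattice : CompleteSublattice V :=
  .mk' {v | v = ⊥ ∨ ∃ c, IsCause Lb c ∧ c ≤ v}
    (fun S hS => by
      by_cases hS_bot : ∀ v ∈ S, v = ⊥
      · exact .inl (sSup_eq_bot.2 hS_bot)
      push Not at hS_bot
      obtain ⟨v, hv, hv_bot⟩ := hS_bot
      obtain ⟨c, hc, hcv⟩ := (hS hv).resolve_left hv_bot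
      exact .inr ⟨c, hc, hcv.trans (le_sSup hv)⟩)
    (fun S hS => by
      by_cases hS_bot : ∃ v ∈ S, v = ⊥
      · obtain ⟨v, hv, rfl⟩ := hS_bot
        exact .inl (le_bot_iff.1 (sInf_le hv))
      push Not at hS_bot
      exact .inr (exists_isCause_le_sInf fun v hv => (hS hv).resolve_left (hS_bot v hv)))

variable {Lb V}

noncomputable instance : CompletelyDistribLattice (causedSublattice Lb V) :=
  .ofMinimalAxioms <| Subtype.val_injective.completelyDistribLatticeMinimalAxioms .of _
    CompleteSublattice.coe_sSup' CompleteSublattice.coe_sInf'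

variable [CausalAlgebra Lb V]

lemma capp_mem_causedSublattice {a b : V} (ha : a ∈ causedSublattice Lb V)
    (hb : b ∈ causedSublattice Lb V) : capp Lb a b ∈ causedSublattice Lb V := by
  obtain rfl | ⟨c, hc, hca⟩ := ha
  · exact .inl (CausalAlgebra.bot_capp b)
  obtain rfl | ⟨d, hd, hdb⟩ := hb
  · exact .inl (CausalAlgebra.capp_bot a)
  exact .inr ⟨capp Lb c d, hc.app c d hd, (capp_mono_left hca d).trans (capp_mono_right a hdb)⟩

instance : CausalOps Lb (causedSublattice Lb V) where
  capp a b := ⟨capp Lb a.1 b.1, capp_mem_causedSublattice a.2 b.2⟩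
  clabel l := ⟨clabel Lb V l, .inr ⟨_, .label l, le_rfl⟩⟩

lemma isCausalHom_val : IsCausalHom Lb (Subtype.val : causedSublattice Lb V → V) :=
  ⟨fun _ => rfl, fun _ => rfl, fun _ _ => rfl, fun _ => rfl⟩

instance : CausalAlgebra Lb (causedSublattice Lb V) :=
  .of_injective Subtype.val_injective isCausalHom_val

end CausedSublattice

section ValueAlgebra

variable {Lb V : Type} [CompletelyDistribLattice V] [CausalOps Lb V] [IsValueAlgebra Lb V]

lemma IsValueAlgebra.eq_id_of_isCausalHom {f : V → V}
    (hf : IsCausalHom Lb f) : f = id :=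
  (IsValueAlgebra.free (Lb := Lb) V inferInstance).unique hf isCausalHom_id

lemma IsCause.ne_bot {c : V} (hc : IsCause Lb c) : c ≠ ⊥ := by
  obtain ⟨f, hf, -⟩ := IsValueAlgebra.free (Lb := Lb) (V := V) Prop inferInstance
  intro hbot
  simpa [hbot, hf.map_bot] using (hc.map hf).prop

lemma mem_causedSublattice (v : V) : v ∈ causedSublattice Lb V := by
  obtain ⟨f, hf, -⟩ :=
    IsValueAlgebra.free (Lb := Lb) (V := V) (causedSublattice Lb V) inferInstance
  have hval : Subtype.val ∘ f = id :=
    IsValueAlgebra.eq_id_of_isCausalHom (isCausalHom_val.comp hf)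
  have hfv : (f v).1 = v := congrFun hval v
  exact hfv ▸ (f v).2

lemma exists_isCause_le {v : V} (hv : v ≠ ⊥) : ∃ c, IsCause Lb c ∧ c ≤ v :=
  (mem_causedSublattice v).resolve_left hv

lemma capp_ne_bot {a b : V} (ha : a ≠ ⊥) (hb : b ≠ ⊥) : capp Lb a b ≠ ⊥ := by
  obtain ⟨c, hc, hca⟩ := exists_isCause_le (Lb := Lb) ha
  obtain ⟨d, hd, hdb⟩ := exists_isCause_le (Lb := Lb) hb
  exact fun h => (hc.app c d hd).ne_bot <|
    le_bot_iff.1 (h ▸ (capp_mono_left hca d).trans (capp_mono_right a hdb))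

end ValueAlgebra

lemma sInf_ne_bot (Lb : Type) {V : Type} [CompletelyDistribLattice V] [CausalOps Lb V]
    [IsValueAlgebra Lb V] {S : Set V} (hS : ∀ v ∈ S, v ≠ ⊥) : sInf S ≠ ⊥ := by
  obtain ⟨c, hc, hcS⟩ :=
    exists_isCause_le_sInf fun v hv => exists_isCause_le (Lb := Lb) (hS v hv)
  exact fun h => hc.ne_bot (le_bot_iff.1 (h ▸ hcS))

section Programs

variable {Lb V : Type} {At : Set Lb} [CompletelyDistribLattice V]

lemma bodyVal_of_isPositive {r : LRule Lb At} (hr : r.isPositive) (I : ↥At → V) :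
    bodyVal I r = ⨅ a ∈ r.bposA, I a := by
  simp [bodyVal, LRule.bnegA, hr.2]

lemma atomsOf_mono {I I' : ↥At → V} (h : I ≤ I') : AtomsOf I ⊆ AtomsOf I' :=
  fun a ha hI'a => ha (le_bot_iff.1 (hI'a ▸ h a))

lemma atomsOf_subset_of_iwle {I I' : ↥At → V} (h : iwle I I') : AtomsOf I ⊆ AtomsOf I' :=
  h.elim atomsOf_mono subset_of_ssubset

lemma le_of_atomsOf_subset {I J : ↥At → V} (hJ : IsStandard J) (h : AtomsOf I ⊆ AtomsOf J) :
    I ≤ J := fun a => by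
  by_cases hIa : I a = ⊥
  · exact hIa ▸ bot_le
  · exact (hJ a).resolve_left (h hIa) ▸ le_top

lemma IsStandard.eq_of_atomsOf_eq {I J : ↥At → V} (hI : IsStandard I) (hJ : IsStandard J)
    (h : AtomsOf I = AtomsOf J) : I = J :=
  le_antisymm (le_of_atomsOf_subset hJ h.subset) (le_of_atomsOf_subset hI h.symm.subset)

lemma isStandard_ist (I : ↥At → V) : IsStandard (Ist I) := fun a => by
  by_cases hIa : I a = ⊥ <;> simp [Ist, hIa]

variable [CausalOps Lb V]

noncomputable def headVal (I : ↥At → V) (r : LRule Lb At) (a : ↥At) : V :=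
  capp Lb (capp Lb (bodyVal I r) (clabel Lb V r.lbl)) (clabel Lb V (a : Lb))

lemma satisfies_iff_of_isPositive {r : LRule Lb At} (hr : r.isPositive) (I : ↥At → V) :
    Satisfies I r ↔ ∃ a ∈ r.hposA, headVal I r a ≤ I a := by
  simp [Satisfies, headVal, LRule.hnegA, hr.1]

lemma headVal_mono [CausalAlgebra Lb V] {r : LRule Lb At} (hr : r.isPositive) {I I' : ↥At → V}
    (h : I ≤ I') (a : ↥At) : headVal I r a ≤ headVal I' r a := by
  refine capp_mono_left (capp_mono_left ?_ _) _
  rw [bodyVal_of_isPositive hr, bodyVal_of_isPositive hr]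
  exact iInf₂_mono fun b _ => h b

lemma headVal_eq_bot_iff [IsValueAlgebra Lb V] {r : LRule Lb At} (hr : r.isPositive)
    (I : ↥At → V) (a : ↥At) : headVal I r a = ⊥ ↔ ∃ b ∈ r.bposA, I b = ⊥ := by
  constructor
  · intro h
    by_contra! hbody
    refine capp_ne_bot (capp_ne_bot ?_ (IsCause.label _).ne_bot) (IsCause.label _).ne_bot h
    rw [bodyVal_of_isPositive hr, ← sInf_image]
    exact sInf_ne_bot Lb (by rintro _ ⟨b, hb, rfl⟩; exact hbody b hb)
  · rintro ⟨b, hb, hIb⟩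
    have hbody : bodyVal I r = ⊥ :=
      le_bot_iff.1 (bodyVal_of_isPositive hr I ▸ hIb ▸ iInf₂_le b hb)
    simp only [headVal, hbody, CausalAlgebra.bot_capp]

lemma atomsOf_ist [IsValueAlgebra Lb V] (I : ↥At → V) : AtomsOf (Ist I) = AtomsOf I := by
  ext a
  by_cases hIa : I a = ⊥ <;> simp [AtomsOf, Ist, hIa, (IsCause.top (Lb := Lb)).ne_bot]

lemma models_ist [IsValueAlgebra Lb V] {P : Set (LRule Lb At)} (hP : PositiveProg P)
    {I : ↥At → V} (hI : Models I P) : Models (Ist I) P := by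
  intro r hr
  obtain ⟨a, ha, hle⟩ := (satisfies_iff_of_isPositive (hP r hr) I).1 (hI r hr)
  refine (satisfies_iff_of_isPositive (hP r hr) (Ist I)).2 ⟨a, ha, ?_⟩
  by_cases hIa : I a = ⊥
  · obtain ⟨b, hb, hIb⟩ := (headVal_eq_bot_iff (hP r hr) I a).1 (le_bot_iff.1 (hIa ▸ hle))
    rw [(headVal_eq_bot_iff (hP r hr) (Ist I) a).2 ⟨b, hb, by simp [Ist, hIb]⟩]
    exact bot_le
  · simp [Ist, hIa]

lemma models_biInf_of_isChain [CausalAlgebra Lb V] {P : Set (LRule Lb At)} (hP : PositiveProg P)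
    {c : Set (↥At → V)} (hc : IsChain (· ≤ ·) c) (hne : c.Nonempty)
    (hmodels : ∀ I ∈ c, Models I P) : Models (⨅ I ∈ c, I) P := by
  intro r hr
  have hfin : r.hposA.Finite :=
    r.hpos.finite_toSet.preimage Subtype.val_injective.injOn
  obtain ⟨a, ha, hlow⟩ := hc.exists_forall_exists_le_of_finite hne hfin fun I hI =>
    (satisfies_iff_of_isPositive (hP r hr) I).1 (hmodels I hI r hr)
  refine (satisfies_iff_of_isPositive (hP r hr) _).2 ⟨a, ha, ?_⟩
  simp only [iInf_apply]
  refine le_iInf₂ fun I hI => ?_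
  obtain ⟨I', hI', hI'I, hle⟩ := hlow I hI
  calc headVal (⨅ I ∈ c, I) r a ≤ headVal I' r a := headVal_mono (hP r hr) (iInf₂_le I' hI') a
    _ ≤ I' a := hle
    _ ≤ I a := hI'I a

lemma exists_le_minimal_models [CausalAlgebra Lb V] {P : Set (LRule Lb At)}
    (hP : PositiveProg P) {J : ↥At → V} (hJ : Models J P) :
    ∃ I ≤ J, Minimal (Models · P) I := by
  obtain ⟨I, hJI, hI⟩ := zorn_le_nonempty₀ (α := (↥At → V)ᵒᵈ) {I | Models I.ofDual P}
    (fun c hcP hc I hI => ⟨.toDual (⨅ I ∈ c, I.ofDual),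
      models_biInf_of_isChain (c := OrderDual.toDual ⁻¹' c) hP hc.symm ⟨I, hI⟩ hcP,
      fun I' hI' => iInf₂_le (f := fun I (_ : I ∈ c) => I.ofDual) I' hI'⟩) (.toDual J) hJ
  exact ⟨I.ofDual, hJI, Maximal.of_dual (P := (Models · P)) hI⟩

section Stability

variable [IsValueAlgebra Lb V] {P : Set (LRule Lb At)} {I J : ↥At → V}

lemma StdStablePos.ist_eq (hP : PositiveProg P) (hJ : StdStablePos P J) (hI : Models I P)
    (hIJ : AtomsOf I ⊆ AtomsOf J) : Ist I = J :=
  hJ.2.2 _ (isStandard_ist I) (models_ist hP hI)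
    (.inl (le_of_atomsOf_subset hJ.1 (atomsOf_ist I ▸ hIJ)))

lemma StdStablePos.causalStablePos_of_minimal (hP : PositiveProg P) (hJ : StdStablePos P J)
    (hI : Minimal (Models · P) I) (hIJ : I ≤ J) : CausalStablePos P I := by
  refine ⟨hI.prop, fun I' hI' hle => hle.elim (hI.eq_of_le hI') fun hss => ?_⟩
  have hJ_atoms : AtomsOf J = AtomsOf I := by
    rw [← hJ.ist_eq hP hI.prop (atomsOf_mono hIJ), atomsOf_ist]
  have hI'_atoms : AtomsOf I' = AtomsOf I := by
    rw [← atomsOf_ist I', hJ.ist_eq hP hI' (hJ_atoms ▸ hss.subset), hJ_atoms]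
  exact absurd hI'_atoms hss.ne

lemma CausalStablePos.stdStablePos_ist (hP : PositiveProg P) (hI : CausalStablePos P I) :
    StdStablePos P (Ist I) := by
  refine ⟨isStandard_ist I, models_ist hP hI.1, fun K hK hKP hle => ?_⟩
  obtain heq | hss := (atomsOf_ist I ▸ atomsOf_subset_of_iwle hle).eq_or_ssubset
  · exact hK.eq_of_atomsOf_eq (isStandard_ist I) (heq.trans (atomsOf_ist I).symm)
  · exact absurd (hI.2 K hKP (.inr hss) ▸ hss) (ssubset_irrefl _)

end Stability

end Programs

theorem standard_stable_iff_causal_stable_positive_general (Lb V : Type) (At : Set Lb)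
    [CompletelyDistribLattice V] [CausalOps Lb V] [IsValueAlgebra Lb V]
    (P : Set (LRule Lb At)) (hP : PositiveProg P)
    (J : ↥At → V) :
    StdStablePos P J ↔ ∃ I : ↥At → V, CausalStablePos P I ∧ Ist I = J := by
  constructor
  · intro hJ
    obtain ⟨I, hIJ, hI⟩ := exists_le_minimal_models hP hJ.2.1
    exact ⟨I, hJ.causalStablePos_of_minimal hP hI hIJ, hJ.ist_eq hP hI.prop (atomsOf_mono hIJ)⟩
  · rintro ⟨I, hI, rfl⟩
    exact hI.stdStablePos_ist hP

/-- Theorem 3: for a positive program `P`, a standard interpretation `J` is a standard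
stable model of `P` iff there is a causal stable model `I` of `P` with `I^st = J`. -/
theorem standard_stable_iff_causal_stable_positive (Lb V : Type) (At : Set Lb)
    [CompletelyDistribLattice V] [CausalOps Lb V] [IsValueAlgebra Lb V]
    (P : Set (LRule Lb At)) (hP : PositiveProg P)
    (J : ↥At → V) (hJ : IsStandard J) :
    StdStablePos P J ↔ ∃ I : ↥At → V, CausalStablePos P I ∧ Ist I = J :=
  standard_stable_iff_causal_stable_positive_general Lb V At P hP J

end Causal
end
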